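/- Existence and uniqueness for the TPFA scheme: with V_int finite, edges E with transmissivities τ_σ > 0, and such that every connected component of the graph (V, E) contains a boundary cell, the linear system Σ_{σ ∋ K} τ_σ(u_K - u_L) = b_K (K ∈ V_int), with u_L = 0 for boundary cells L, has a unique solution u : V_int → ℝ for every right-hand side b. -/

import Mathlib

/-!
A solution `u` of the homogeneous system has zero energy
`Σ_K u_K · Σ_{σ∋K} τ_σ (u_K - u_L) = Σ_σ τ_σ (u_K - u_L)²`, since the boundary values vanish.
With `τ > 0` this forces `u` to be constant along every edge, hence on every connected component,
and each component reaches a boundary cell, where `u = 0`. So the square linear system on `V → ℝ`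
has trivial kernel, and is therefore invertible.
-/

/-- The sum over edges incident to the cell `K` of the two-point fluxes
`F_{K,σ} = τ_σ (u_K - u_L)`. -/
def incidentFluxSum {V : Type*} [DecidableEq V] (E : Finset (V × V)) (τ : V × V → ℝ)
    (u : V → ℝ) (K : V) : ℝ :=
  (∑ σ ∈ E.filter fun σ => σ.1 = K, τ σ * (u K - u σ.2)) +
    ∑ σ ∈ E.filter fun σ => σ.2 = K, τ σ * (u K - u σ.1)

/-- Adjacency relation of the (unoriented) graph whose edges are stored in `E`. -/
def graphAdj {V : Type*} (E : Finset (V × V)) (K L : V) : Prop :=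
  (K, L) ∈ E ∨ (L, K) ∈ E

open Finset

section Graph

variable {V : Type*} {E : Finset (V × V)}

theorem eq_of_reflTransGen_graphAdj {α : Type*} {u : V → α} (hu : ∀ σ ∈ E, u σ.1 = u σ.2)
    {K L : V} (h : Relation.ReflTransGen (graphAdj E) K L) : u K = u L := by
  induction h with
  | refl => rfl
  | tail _ hadj ih =>
    rcases hadj with hσ | hσ
    · exact ih.trans (hu _ hσ)
    · exact ih.trans (hu _ hσ).symm

end Graph

section Flux

variable {V : Type*} [DecidableEq V] (E : Finset (V × V)) (τ : V × V → ℝ)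

theorem sum_mul_incidentFluxSum [Fintype V] (u : V → ℝ) :
    ∑ K, u K * incidentFluxSum E τ u K = ∑ σ ∈ E, τ σ * (u σ.1 - u σ.2) ^ 2 := by
  have hfibers : ∀ K, u K * incidentFluxSum E τ u K =
      (∑ σ ∈ E with σ.1 = K, τ σ * (u σ.1 - u σ.2) * u σ.1) +
        ∑ σ ∈ E with σ.2 = K, τ σ * (u σ.2 - u σ.1) * u σ.2 := by
    intro K
    rw [incidentFluxSum, mul_add, mul_sum, mul_sum]
    congr 1 <;> refine sum_congr rfl fun σ hσ => ?_ <;> rw [(mem_filter.mp hσ).2] <;> ring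
  simp_rw [hfibers, sum_add_distrib, sum_fiberwise, ← sum_add_distrib]
  exact sum_congr rfl fun σ _ => by ring

def fluxMap : (V → ℝ) →ₗ[ℝ] V → ℝ where
  toFun := incidentFluxSum E τ
  map_add' u v := by
    ext K
    simp only [incidentFluxSum, Pi.add_apply]
    rw [add_add_add_comm, ← sum_add_distrib, ← sum_add_distrib]
    congr 1 <;> exact sum_congr rfl fun σ _ => by ring
  map_smul' c u := by
    ext K
    simp only [incidentFluxSum, Pi.smul_apply, smul_eq_mul, RingHom.id_apply, mul_add, mul_sum]
    congr 1 <;> exact sum_congr rfl fun σ _ => by ring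

/-- The matrix of the TPFA scheme on all of `V`: the flux balance in the rows of interior cells,
and the identity in the rows of boundary cells, which encode the condition `u_L = 0`. -/
def tpfaOperator (Vint : Finset V) : (V → ℝ) →ₗ[ℝ] V → ℝ :=
  LinearMap.pi fun K => if K ∈ Vint then LinearMap.proj K ∘ₗ fluxMap E τ else LinearMap.proj K

variable {E τ} {Vint : Finset V}

theorem tpfaOperator_eq_piecewise_iff {u b : V → ℝ} :
    tpfaOperator E τ Vint u = Vint.piecewise b 0 ↔
      (∀ K, K ∉ Vint → u K = 0) ∧ ∀ K ∈ Vint, incidentFluxSum E τ u K = b K := by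
  simp only [funext_iff, tpfaOperator, LinearMap.pi_apply]
  refine ⟨fun h => ⟨fun K hK => ?_, fun K hK => ?_⟩, fun ⟨h0, hb⟩ K => ?_⟩
  · simpa [hK] using h K
  · simpa [hK, fluxMap] using h K
  · by_cases hK : K ∈ Vint <;> simp [hK, fluxMap, h0, hb]

theorem tpfaOperator_injective [Fintype V] (hτ : ∀ σ ∈ E, 0 < τ σ)
    (hconn : ∀ K : V, ∃ B : V, B ∉ Vint ∧ Relation.ReflTransGen (graphAdj E) K B) :
    Function.Injective (tpfaOperator E τ Vint) := by
  refine (injective_iff_map_eq_zero _).mpr fun u hu => ?_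
  rw [← piecewise_same Vint (0 : V → ℝ), tpfaOperator_eq_piecewise_iff] at hu
  obtain ⟨h0, hflux⟩ := hu
  have henergy : ∑ σ ∈ E, τ σ * (u σ.1 - u σ.2) ^ 2 = 0 := by
    rw [← sum_mul_incidentFluxSum]
    refine sum_eq_zero fun K _ => ?_
    by_cases hK : K ∈ Vint
    · rw [hflux K hK, Pi.zero_apply, mul_zero]
    · rw [h0 K hK, zero_mul]
  have hedge : ∀ σ ∈ E, u σ.1 = u σ.2 := by
    intro σ hσ
    have hterm := (sum_eq_zero_iff_of_nonneg fun σ hσ =>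
      mul_nonneg (hτ σ hσ).le (sq_nonneg (u σ.1 - u σ.2))).mp henergy σ hσ
    rwa [mul_eq_zero, or_iff_right (hτ σ hσ).ne', sq_eq_zero_iff, sub_eq_zero] at hterm
  ext K
  obtain ⟨B, hB, hKB⟩ := hconn K
  rw [eq_of_reflTransGen_graphAdj hedge hKB, h0 B hB, Pi.zero_apply]

end Flux

theorem tpfa_exists_unique_general {V : Type*} [Fintype V] [DecidableEq V]
    (Vint : Finset V) (E : Finset (V × V))
    (τ : V × V → ℝ) (hτ : ∀ σ ∈ E, 0 < τ σ)
    (hconn : ∀ K : V, ∃ B : V, B ∉ Vint ∧ Relation.ReflTransGen (graphAdj E) K B) :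
    ∀ b : V → ℝ, ∃! u : V → ℝ,
      (∀ K, K ∉ Vint → u K = 0) ∧ ∀ K ∈ Vint, incidentFluxSum E τ u K = b K := by
  intro b
  have hinj := tpfaOperator_injective hτ hconn
  obtain ⟨u, hu⟩ := LinearMap.injective_iff_surjective.mp hinj (Vint.piecewise b 0)
  refine ⟨u, tpfaOperator_eq_piecewise_iff.mp hu, fun v hv => hinj ?_⟩
  rw [hu, tpfaOperator_eq_piecewise_iff.mpr hv]

/-- Existence and uniqueness for the TPFA scheme: if all transmissivities are positive and
every connected component of the graph contains a boundary cell, then for every right-hand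
side `b` there is a unique `u` vanishing on boundary cells and satisfying the flux balances
`Σ_{σ∋K} τ_σ(u_K - u_L) = b_K` on interior cells. -/
theorem tpfa_exists_unique {V : Type*} [Fintype V] [DecidableEq V]
    (Vint : Finset V) (E : Finset (V × V)) (hE : ∀ σ ∈ E, σ.1 ≠ σ.2)
    (τ : V × V → ℝ) (hτ : ∀ σ ∈ E, 0 < τ σ)
    (hconn : ∀ K : V, ∃ B : V, B ∉ Vint ∧ Relation.ReflTransGen (graphAdj E) K B) :
    ∀ b : V → ℝ, ∃! u : V → ℝ,
      (∀ K, K ∉ Vint → u K = 0) ∧ ∀ K ∈ Vint, incidentFluxSum E τ u K = b K :=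
  tpfa_exists_unique_general Vint E τ hτ hconn
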